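/- Let $(\mu_n)_{n\in\mathbb{N}}$ and $\mu$ be finite Borel measures on $\mathbb{R}$ all supported in $[c, \infty)$ for some $c \in \mathbb{R}$, with finite Laplace transforms $\tilde{\mu}_n(t) = \int e^{-tx} d\mu_n(x) < \infty$ for all $t > 0$. If $\tilde{\mu}_n(t) \to \tilde{\mu}(t)$ as $n \to \infty$ for every $t > 0$, then $\mu_n$ converges vaguely to $\mu$: $\int f\, d\mu_n \to \int f\, d\mu$ for every continuous function $f$ with compact support. -/
import Mathlib


open Filter MeasureTheory

private lemma laux_ae_ge (ν : Measure ℝ) (c : ℝ) (hsupp : ν (Set.Iio c) = 0) :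
    ∀ᵐ x ∂ν, c ≤ x := by
  rw [ae_iff]
  have : {a : ℝ | ¬ c ≤ a} = Set.Iio c := by ext x; simp [not_le]
  rw [this]; exact hsupp

private lemma laux_integrable (ν : Measure ℝ) [IsFiniteMeasure ν] (c : ℝ)
    (hsupp : ν (Set.Iio c) = 0) (t : ℝ) (ht : 0 < t) :
    Integrable (fun x => Real.exp (-t * x)) ν := by
  refine (integrable_const (Real.exp (-t * c))).mono'
    (Continuous.aestronglyMeasurable (by continuity)) ?_
  filter_upwards [laux_ae_ge ν c hsupp] with x hx
  rw [Real.norm_eq_abs, abs_of_pos (Real.exp_pos _)]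
  exact Real.exp_le_exp.2 (by nlinarith)

private lemma laux_expand (p : Polynomial ℝ) (x : ℝ) :
    Real.exp (-x) * p.eval (Real.exp (-x))
      = ∑ k ∈ Finset.range (p.natDegree + 1),
          p.coeff k * Real.exp (-((k : ℝ) + 1) * x) := by
  rw [Polynomial.eval_eq_sum_range, Finset.mul_sum]
  refine Finset.sum_congr rfl fun k _ => ?_
  have h1 : Real.exp (-x) ^ k = Real.exp ((k : ℝ) * (-x)) := by
    rw [Real.exp_nat_mul]
  rw [h1, ← mul_assoc, mul_comm (Real.exp (-x)) (p.coeff k), mul_assoc, ← Real.exp_add]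
  ring_nf

private lemma laux_Gint (ν : Measure ℝ) [IsFiniteMeasure ν] (c : ℝ)
    (hsupp : ν (Set.Iio c) = 0) (p : Polynomial ℝ) :
    Integrable (fun x => Real.exp (-x) * p.eval (Real.exp (-x))) ν := by
  have h : (fun x => Real.exp (-x) * p.eval (Real.exp (-x)))
      = fun x => ∑ k ∈ Finset.range (p.natDegree + 1),
          p.coeff k * Real.exp (-((k : ℝ) + 1) * x) := funext fun x => laux_expand p x
  rw [h]
  exact integrable_finset_sum _ fun k _ =>
    (laux_integrable ν c hsupp _ (by positivity)).const_mul _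

private lemma laux_integral_G (ν : Measure ℝ) [IsFiniteMeasure ν] (c : ℝ)
    (hsupp : ν (Set.Iio c) = 0) (p : Polynomial ℝ) :
    ∫ x, Real.exp (-x) * p.eval (Real.exp (-x)) ∂ν
      = ∑ k ∈ Finset.range (p.natDegree + 1),
          p.coeff k * ∫ x, Real.exp (-((k : ℝ) + 1) * x) ∂ν := by
  simp_rw [laux_expand p]
  rw [integral_finset_sum _ fun k _ =>
    (laux_integrable ν c hsupp _ (by positivity)).const_mul _]
  exact Finset.sum_congr rfl fun k _ => integral_const_mul _ _

private lemma laux_close (ν : Measure ℝ) [IsFiniteMeasure ν] (c ε : ℝ)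
    (hsupp : ν (Set.Iio c) = 0) (f : ℝ → ℝ) (hf : Continuous f)
    (hcs : HasCompactSupport f) (p : Polynomial ℝ)
    (hp : ∀ x, c ≤ x →
      |f x - Real.exp (-x) * p.eval (Real.exp (-x))| ≤ ε * Real.exp (-1 * x)) :
    |(∫ x, f x ∂ν) - ∫ x, Real.exp (-x) * p.eval (Real.exp (-x)) ∂ν|
      ≤ ε * ∫ x, Real.exp (-1 * x) ∂ν := by
  have hfint : Integrable f ν := hf.integrable_of_hasCompactSupport hcs
  have hGint := laux_Gint ν c hsupp p
  rw [← integral_sub hfint hGint]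
  calc |∫ x, (f x - Real.exp (-x) * p.eval (Real.exp (-x))) ∂ν|
      ≤ ∫ x, |f x - Real.exp (-x) * p.eval (Real.exp (-x))| ∂ν := by
        have := norm_integral_le_integral_norm
          (μ := ν) (fun x => f x - Real.exp (-x) * p.eval (Real.exp (-x)))
        simpa [Real.norm_eq_abs] using this
    _ ≤ ∫ x, ε * Real.exp (-1 * x) ∂ν := by
        refine integral_mono_ae (hfint.sub hGint).abs
          ((laux_integrable ν c hsupp 1 one_pos).const_mul ε) ?_
        filter_upwards [laux_ae_ge ν c hsupp] with x hx
        exact hp x hx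
    _ = ε * ∫ x, Real.exp (-1 * x) ∂ν := integral_const_mul _ _

/-- Continuity theorem for Laplace transforms of measures supported in
`[c, ∞)`: pointwise convergence of the Laplace transforms on `(0, ∞)` implies
vague convergence of the measures. -/
theorem laplace_continuity_theorem_vague_convergence
    (μn : ℕ → Measure ℝ) (μ : Measure ℝ)
    [∀ n, IsFiniteMeasure (μn n)] [IsFiniteMeasure μ]
    (c : ℝ)
    (hsuppn : ∀ n, μn n (Set.Iio c) = 0) (hsupp : μ (Set.Iio c) = 0)
    (hint : ∀ n, ∀ t > (0 : ℝ), Integrable (fun x => Real.exp (-t * x)) (μn n))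
    (hconv : ∀ t > (0 : ℝ),
      Tendsto (fun n => ∫ x, Real.exp (-t * x) ∂(μn n)) atTop
        (nhds (∫ x, Real.exp (-t * x) ∂μ))) :
    ∀ f : ℝ → ℝ, Continuous f → HasCompactSupport f →
      Tendsto (fun n => ∫ x, f x ∂(μn n)) atTop (nhds (∫ x, f x ∂μ)) := by
  intro f hf hcs
  -- radius of the support
  obtain ⟨R, hR0, hR⟩ : ∃ R : ℝ, 0 < R ∧ ∀ x : ℝ, R ≤ ‖x‖ → f x = 0 :=
    hcs.exists_pos_le_norm
  -- the auxiliary function H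
  set H : ℝ → ℝ := fun y => if 0 < y then f (-Real.log y) / y else 0 with hHdef
  have hH0 : ∀ y : ℝ, y < Real.exp (-R) → H y = 0 := by
    intro y hy
    by_cases h : 0 < y
    · have hlog : Real.log y < -R := by
        calc Real.log y < Real.log (Real.exp (-R)) := Real.log_lt_log h hy
          _ = -R := Real.log_exp _
      have : f (-Real.log y) = 0 := by
        apply hR
        rw [Real.norm_eq_abs]
        have : R < -Real.log y := by linarith
        rw [abs_of_pos (by linarith)]
        linarith
      simp [hHdef, h, this]
    · simp [hHdef, h]
  have hHcont : Continuous H := by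
    rw [continuous_iff_continuousAt]
    intro y
    rcases lt_or_ge y (Real.exp (-R)) with h | h
    · have hev : H =ᶠ[nhds y] fun _ => (0 : ℝ) := by
        filter_upwards [Iio_mem_nhds h] with z hz
        exact hH0 z hz
      exact hev.continuousAt
    · have hy0 : 0 < y := lt_of_lt_of_le (Real.exp_pos _) h
      have hcongr : H =ᶠ[nhds y] fun z => f (-Real.log z) / z := by
        filter_upwards [Ioi_mem_nhds hy0] with z hz
        simp [hHdef, Set.mem_Ioi.1 hz]
      refine ContinuousAt.congr ?_ hcongr.symm
      exact (hf.continuousAt.comp ((Real.continuousAt_log (ne_of_gt hy0)).neg)).div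
        continuousAt_id (ne_of_gt hy0)
  have hfx : ∀ x : ℝ, f x = Real.exp (-x) * H (Real.exp (-x)) := by
    intro x
    have hpos : (0 : ℝ) < Real.exp (-x) := Real.exp_pos _
    simp only [hHdef, if_pos hpos, Real.log_exp, neg_neg]
    field_simp
  -- mass bound
  have h1conv := hconv 1 one_pos
  obtain ⟨C, hC⟩ : ∃ C : ℝ, ∀ n, (∫ x, Real.exp (-1 * x) ∂(μn n)) ≤ C := by
    obtain ⟨C, hC⟩ := h1conv.bddAbove_range
    exact ⟨C, fun n => hC ⟨n, rfl⟩⟩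
  have hCμ : (∫ x, Real.exp (-1 * x) ∂μ) ≤ C :=
    le_of_tendsto h1conv (Eventually.of_forall hC)
  have hC0 : 0 ≤ C := le_trans (integral_nonneg fun x => (Real.exp_pos _).le) (hC 0)
  -- epsilon argument
  rw [Metric.tendsto_atTop]
  intro ε' hε'
  set ε : ℝ := ε' / (3 * (C + 1)) with hεdef
  have hεpos : 0 < ε := by positivity
  -- Weierstrass approximation of H on [0, exp(-c)]
  obtain ⟨p, hp⟩ := exists_polynomial_near_of_continuousOn 0 (Real.exp (-c)) H
    hHcont.continuousOn ε hεpos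
  -- pointwise bound
  have hbound : ∀ x : ℝ, c ≤ x →
      |f x - Real.exp (-x) * p.eval (Real.exp (-x))| ≤ ε * Real.exp (-1 * x) := by
    intro x hx
    have hmem : Real.exp (-x) ∈ Set.Icc 0 (Real.exp (-c)) :=
      ⟨(Real.exp_pos _).le, Real.exp_le_exp.2 (by linarith)⟩
    have := hp _ hmem
    rw [hfx x, ← mul_sub, abs_mul, abs_of_pos (Real.exp_pos _), neg_one_mul]
    have h2 : |H (Real.exp (-x)) - p.eval (Real.exp (-x))| ≤ ε := by
      rw [abs_sub_comm]; exact this.le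
    calc Real.exp (-x) * |H (Real.exp (-x)) - p.eval (Real.exp (-x))|
        ≤ Real.exp (-x) * ε := by
          exact mul_le_mul_of_nonneg_left h2 (Real.exp_pos _).le
      _ = ε * Real.exp (-x) := mul_comm _ _
  -- convergence of the polynomial integrals
  have hGconv : Tendsto (fun n => ∫ x, Real.exp (-x) * p.eval (Real.exp (-x)) ∂(μn n))
      atTop (nhds (∫ x, Real.exp (-x) * p.eval (Real.exp (-x)) ∂μ)) := by
    have heq : ∀ n, (∫ x, Real.exp (-x) * p.eval (Real.exp (-x)) ∂(μn n))
        = ∑ k ∈ Finset.range (p.natDegree + 1),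
            p.coeff k * ∫ x, Real.exp (-((k : ℝ) + 1) * x) ∂(μn n) :=
      fun n => laux_integral_G (μn n) c (hsuppn n) p
    rw [laux_integral_G μ c hsupp p]
    simp_rw [heq]
    exact tendsto_finset_sum _ fun k _ =>
      (hconv ((k : ℝ) + 1) (by positivity)).const_mul _
  obtain ⟨N, hN⟩ := (Metric.tendsto_atTop.1 hGconv) (ε' / 3) (by positivity)
  refine ⟨N, fun n hn => ?_⟩
  have h1 := laux_close (μn n) c ε (hsuppn n) f hf hcs p hbound
  have h2 := laux_close μ c ε hsupp f hf hcs p hbound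
  have h3 := hN n hn
  rw [Real.dist_eq] at h3 ⊢
  have hb1 : ε * (∫ x, Real.exp (-1 * x) ∂(μn n)) ≤ ε * C :=
    mul_le_mul_of_nonneg_left (hC n) hεpos.le
  have hb2 : ε * (∫ x, Real.exp (-1 * x) ∂μ) ≤ ε * C :=
    mul_le_mul_of_nonneg_left hCμ hεpos.le
  have hεC : ε * C < ε' / 3 := by
    rw [hεdef]
    rw [div_mul_eq_mul_div, div_lt_div_iff₀ (by positivity) (by norm_num)]
    nlinarith
  calc |(∫ x, f x ∂(μn n)) - ∫ x, f x ∂μ|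
      ≤ |(∫ x, f x ∂(μn n)) - ∫ x, Real.exp (-x) * p.eval (Real.exp (-x)) ∂(μn n)|
        + |(∫ x, Real.exp (-x) * p.eval (Real.exp (-x)) ∂(μn n))
            - ∫ x, Real.exp (-x) * p.eval (Real.exp (-x)) ∂μ|
        + |(∫ x, Real.exp (-x) * p.eval (Real.exp (-x)) ∂μ) - ∫ x, f x ∂μ| := by
          have t1 := abs_sub_le (∫ x, f x ∂(μn n))
            (∫ x, Real.exp (-x) * p.eval (Real.exp (-x)) ∂(μn n)) (∫ x, f x ∂μ)
          have t2 := abs_sub_le (∫ x, Real.exp (-x) * p.eval (Real.exp (-x)) ∂(μn n))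
            (∫ x, Real.exp (-x) * p.eval (Real.exp (-x)) ∂μ) (∫ x, f x ∂μ)
          linarith
    _ < ε' := by
        rw [abs_sub_comm (∫ x, Real.exp (-x) * p.eval (Real.exp (-x)) ∂μ)] at *
        linarith [le_trans h1 hb1, le_trans h2 hb2]
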